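/- arXiv:1007.3755 — 4 statements merged into one kernel-verified Lean document; each statement's English description precedes it below -/
import Mathlib

section
/- Let A be an irreducible symmetric n×n real matrix with nonnegative entries, n ≥ 2. Then the largest eigenvalue λ₁ of A has a corresponding eigenvector all of whose coordinates are strictly positive. -/
/-!
The top eigenvalue `μ` of a real symmetric matrix `A` bounds its Rayleigh quotient, and since
`μ • 1 - A` is positive semidefinite, a vector attaining the bound is a `μ`-eigenvector.
If `A ≥ 0` entrywise and `w` is a `μ`-eigenvector, then `μ |w| ≤ A |w|` entrywise, so `|w|`
attains the bound: it is a nonnegative `μ`-eigenvector. Irreducibility makes it positive: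
choosing `j` with `vⱼ > 0` and `k` with `(A ^ k)ᵢⱼ > 0` gives `μ ^ k vᵢ = (A ^ k v)ᵢ > 0`.
-/

open scoped MatrixOrder ComplexOrder

namespace Matrix

variable {ι : Type*} [Fintype ι]

theorem IsHermitian.posSemidef_iSup_eigenvalues_smul_one_sub [DecidableEq ι] {𝕜 : Type*}
    [RCLike 𝕜] {A : Matrix ι ι 𝕜} (hA : A.IsHermitian) :
    ((⨆ i, hA.eigenvalues i) • 1 - A).PosSemidef := by
  have hle : A ≤ algebraMap ℝ _ (⨆ i, hA.eigenvalues i) := by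
    refine le_algebraMap_of_spectrum_le ?_ hA.isSelfAdjoint
    rw [hA.spectrum_real_eq_range_eigenvalues]
    rintro _ ⟨i, rfl⟩
    exact le_ciSup (Set.finite_range _).bddAbove i
  rwa [le_iff, Algebra.algebraMap_eq_smul_one] at hle

section Rayleigh

variable [DecidableEq ι] {A : Matrix ι ι ℝ} (hA : A.IsHermitian)

theorem IsHermitian.dotProduct_mulVec_le_iSup_eigenvalues_mul (x : ι → ℝ) :
    x ⬝ᵥ A *ᵥ x ≤ (⨆ i, hA.eigenvalues i) * (x ⬝ᵥ x) := by
  have := hA.posSemidef_iSup_eigenvalues_smul_one_sub.dotProduct_mulVec_nonneg x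
  simp only [star_trivial, sub_mulVec, smul_mulVec, one_mulVec, dotProduct_sub,
    dotProduct_smul, smul_eq_mul] at this
  linarith

theorem IsHermitian.mulVec_eq_iSup_eigenvalues_smul_of_dotProduct_mulVec_eq {x : ι → ℝ}
    (hx : x ⬝ᵥ A *ᵥ x = (⨆ i, hA.eigenvalues i) * (x ⬝ᵥ x)) :
    A *ᵥ x = (⨆ i, hA.eigenvalues i) • x := by
  have := (hA.posSemidef_iSup_eigenvalues_smul_one_sub.dotProduct_mulVec_zero_iff x).mp (by
    simp only [star_trivial, sub_mulVec, smul_mulVec, one_mulVec, dotProduct_sub,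
      dotProduct_smul, smul_eq_mul, hx, sub_self])
  rw [sub_mulVec, smul_mulVec, one_mulVec, sub_eq_zero] at this
  exact this.symm

end Rayleigh

theorem pow_mulVec_of_mulVec_eq_smul [DecidableEq ι] {R : Type*} [CommSemiring R]
    {A : Matrix ι ι R} {μ : R} {v : ι → R} (hv : A *ᵥ v = μ • v) (k : ℕ) :
    (A ^ k) *ᵥ v = μ ^ k • v := by
  induction k with
  | zero => simp
  | succ k ih => rw [pow_succ, ← mulVec_mulVec, hv, mulVec_smul, ih, smul_smul, pow_succ']

section Nonneg

variable {A : Matrix ι ι ℝ} (hA₀ : ∀ i j, 0 ≤ A i j)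
include hA₀

theorem smul_abs_le_mulVec_abs_of_mulVec_eq_smul {μ : ℝ} {w : ι → ℝ} (hw : A *ᵥ w = μ • w) :
    μ • |w| ≤ A *ᵥ |w| := fun i ↦
  calc μ * |w i| ≤ |μ| * |w i| := by gcongr; exact le_abs_self μ
    _ = |(A *ᵥ w) i| := by rw [hw, Pi.smul_apply, smul_eq_mul, abs_mul]
    _ ≤ ∑ j, |A i j * w j| := Finset.abs_sum_le_sum_abs _ _
    _ = (A *ᵥ |w|) i := by simp only [abs_mul, abs_of_nonneg (hA₀ i _)]; rfl

theorem IsHermitian.exists_nonneg_mulVec_eq_iSup_eigenvalues_smul [DecidableEq ι] [Nonempty ι]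
    (hA : A.IsHermitian) :
    ∃ v : ι → ℝ, v ≠ 0 ∧ 0 ≤ v ∧ A *ᵥ v = (⨆ i, hA.eigenvalues i) • v := by
  set μ := ⨆ i, hA.eigenvalues i
  obtain ⟨i₀, hi₀⟩ := exists_eq_ciSup_of_finite (f := hA.eigenvalues)
  set w : ι → ℝ := ⇑(hA.eigenvectorBasis i₀)
  have hw : A *ᵥ w = μ • w := by rw [hA.mulVec_eigenvectorBasis i₀, hi₀]
  have hw0 : w ≠ 0 := fun h ↦
    hA.eigenvectorBasis.orthonormal.ne_zero i₀ (by ext j; exact congrFun h j)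
  have hle : μ * (|w| ⬝ᵥ |w|) ≤ |w| ⬝ᵥ A *ᵥ |w| := by
    rw [← smul_eq_mul, ← dotProduct_smul]
    exact dotProduct_le_dotProduct_of_nonneg_left
      (smul_abs_le_mulVec_abs_of_mulVec_eq_smul hA₀ hw) (abs_nonneg w)
  refine ⟨|w|, by simpa using hw0, abs_nonneg w, ?_⟩
  exact hA.mulVec_eq_iSup_eigenvalues_smul_of_dotProduct_mulVec_eq
    (le_antisymm (hA.dotProduct_mulVec_le_iSup_eigenvalues_mul |w|) hle)

theorem pos_of_mulVec_eq_smul [DecidableEq ι] (hirr : ∀ i j, ∃ k : ℕ, (A ^ k) i j ≠ 0) {μ : ℝ}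
    {v : ι → ℝ} (hv : A *ᵥ v = μ • v) (hv_nonneg : 0 ≤ v) (hv_ne : v ≠ 0) (i : ι) : 0 < v i := by
  obtain ⟨j, hj⟩ := Function.ne_iff.mp hv_ne
  obtain ⟨k, hk⟩ := hirr i j
  have hAk : 0 < (A ^ k) i j := (pow_apply_nonneg hA₀ k i j).lt_of_ne' hk
  have : 0 < μ ^ k * v i :=
    calc 0 < (A ^ k) i j * v j := mul_pos hAk ((hv_nonneg j).lt_of_ne' hj)
      _ ≤ ((A ^ k) *ᵥ v) i :=
        Finset.single_le_sum (fun l _ ↦ mul_nonneg (pow_apply_nonneg hA₀ k i l) (hv_nonneg l))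
          (Finset.mem_univ j)
      _ = μ ^ k * v i := by rw [pow_mulVec_of_mulVec_eq_smul hv]; rfl
  exact (hv_nonneg i).lt_of_ne' fun h ↦ by simp [h] at this

end Nonneg

end Matrix

theorem stmt_7 (n : ℕ) (hn : 2 ≤ n) (A : Matrix (Fin n) (Fin n) ℝ) (hA : A.IsHermitian)
    (hpos : ∀ i j, 0 ≤ A i j) (hirr : ∀ i j, ∃ k : ℕ, (A ^ k) i j ≠ 0) :
    ∃ v : Fin n → ℝ, A.mulVec v = (⨆ i, hA.eigenvalues i) • v ∧ ∀ i, 0 < v i := by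
  have : Nonempty (Fin n) := ⟨⟨0, by omega⟩⟩
  obtain ⟨v, hv_ne, hv_nonneg, hv⟩ := hA.exists_nonneg_mulVec_eq_iSup_eigenvalues_smul hpos
  exact ⟨v, hv, Matrix.pos_of_mulVec_eq_smul hpos hirr hv hv_nonneg hv_ne⟩
end

section
/- Let A be an irreducible symmetric n×n real matrix with nonnegative entries. Then the largest eigenvalue of A has multiplicity one (its eigenspace is one-dimensional). -/
/-!
Let `μ` be the largest eigenvalue of `A`. In an orthonormal eigenbasis, `μ ‖x‖² - ⟪x, A x⟫` is a
combination of squares with nonnegative coefficients `μ - λᵢ`, so it is nonnegative and vanishes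
only if `A x = μ x`. As `A ≥ 0` entrywise, `⟪|v|, A |v|⟫ ≥ ⟪v, A v⟫`; hence `|v|` is a
`μ`-eigenvector together with `v`. A nonnegative `μ`-eigenvector `w` with `w i = 0` vanishes: for
each `j` irreducibility gives `(A ^ k) i j > 0`, and `0 = μ ^ k w i ≥ (A ^ k) i j * w j`. So
`v ↦ v i` is injective on the `μ`-eigenspace, which is nonzero.
-/

open Matrix Finset RealInnerProductSpace

namespace OrthonormalBasis

variable {ι E : Type*} [Fintype ι] [NormedAddCommGroup E] [InnerProductSpace ℝ E]
  (b : OrthonormalBasis ι ℝ E) {T : E →ₗ[ℝ] E} {d : ι → ℝ}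

theorem map_eq_sum_smul (hT : ∀ i, T (b i) = d i • b i) (x : E) :
    T x = ∑ i, (d i * ⟪b i, x⟫) • b i := by
  conv_lhs => rw [← b.sum_repr' x]
  simp only [map_sum, map_smul, hT, smul_smul, mul_comm]

theorem inner_map_self_eq_sum (hT : ∀ i, T (b i) = d i • b i) (x : E) :
    ⟪x, T x⟫ = ∑ i, d i * ⟪b i, x⟫ ^ 2 := by
  rw [b.map_eq_sum_smul hT, inner_sum]
  refine sum_congr rfl fun i _ => ?_
  rw [inner_smul_right, real_inner_comm]
  ring

theorem inner_map_self_nonneg (hT : ∀ i, T (b i) = d i • b i) (hd : ∀ i, 0 ≤ d i) (x : E) :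
    0 ≤ ⟪x, T x⟫ := by
  rw [b.inner_map_self_eq_sum hT]
  exact sum_nonneg fun i _ => mul_nonneg (hd i) (sq_nonneg _)

theorem map_eq_zero_of_inner_map_self_eq_zero (hT : ∀ i, T (b i) = d i • b i)
    (hd : ∀ i, 0 ≤ d i) {x : E} (hx : ⟪x, T x⟫ = 0) : T x = 0 := by
  rw [b.inner_map_self_eq_sum hT,
    sum_eq_zero_iff_of_nonneg fun i _ => mul_nonneg (hd i) (sq_nonneg _)] at hx
  rw [b.map_eq_sum_smul hT]
  refine sum_eq_zero fun i hi => ?_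
  have : d i * ⟪b i, x⟫ = 0 := by
    rcases mul_eq_zero.mp (hx i hi) with h | h
    · rw [h, zero_mul]
    · rw [pow_eq_zero_iff two_ne_zero |>.mp h, mul_zero]
  rw [this, zero_smul]

end OrthonormalBasis

namespace Matrix

variable {ι : Type*} [Fintype ι]

theorem inner_toLp_toEuclideanLin_toLp [DecidableEq ι] (B : Matrix ι ι ℝ) (x : ι → ℝ) :
    ⟪WithLp.toLp 2 x, toEuclideanLin B (WithLp.toLp 2 x)⟫ = x ⬝ᵥ B *ᵥ x := by
  rw [toLpLin_toLp, EuclideanSpace.inner_toLp_toLp, star_trivial, dotProduct_comm, toLin'_apply]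

theorem dotProduct_smul_one_sub_mulVec [DecidableEq ι] (A : Matrix ι ι ℝ) (μ : ℝ) (x : ι → ℝ) :
    x ⬝ᵥ (μ • 1 - A) *ᵥ x = μ * (x ⬝ᵥ x) - x ⬝ᵥ A *ᵥ x := by
  rw [sub_mulVec, smul_mulVec, one_mulVec, dotProduct_sub, dotProduct_smul, smul_eq_mul]

theorem dotProduct_mulVec_le_abs {A : Matrix ι ι ℝ} (hA : ∀ i j, 0 ≤ A i j) (x : ι → ℝ) :
    x ⬝ᵥ A *ᵥ x ≤ |x| ⬝ᵥ A *ᵥ |x| := by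
  simp only [dotProduct, mulVec, mul_sum, Pi.abs_apply]
  refine sum_le_sum fun i _ => sum_le_sum fun j _ => ?_
  calc x i * (A i j * x j) ≤ |x i * (A i j * x j)| := le_abs_self _
    _ = |x i| * (A i j * |x j|) := by rw [abs_mul, abs_mul, abs_of_nonneg (hA i j)]

theorem abs_dotProduct_abs (x : ι → ℝ) : |x| ⬝ᵥ |x| = x ⬝ᵥ x := by
  simp only [dotProduct, Pi.abs_apply, abs_mul_abs_self]

theorem pow_mulVec_eq_smul [DecidableEq ι] {A : Matrix ι ι ℝ} {μ : ℝ} {w : ι → ℝ}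
    (hw : A *ᵥ w = μ • w) (k : ℕ) : (A ^ k) *ᵥ w = μ ^ k • w := by
  induction k with
  | zero => rw [pow_zero, pow_zero, one_mulVec, one_smul]
  | succ k ih => rw [pow_succ', ← mulVec_mulVec, ih, mulVec_smul, hw, smul_smul, ← pow_succ]

theorem eq_zero_of_nonneg_of_mulVec_eq_smul_of_apply_eq_zero [DecidableEq ι]
    {A : Matrix ι ι ℝ} (hpos : ∀ i j, 0 ≤ A i j) (hirr : ∀ i j, ∃ k : ℕ, (A ^ k) i j ≠ 0)
    {μ : ℝ} {w : ι → ℝ} (hw : 0 ≤ w) (hAw : A *ᵥ w = μ • w) {i : ι} (hwi : w i = 0) :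
    w = 0 := by
  ext j
  obtain ⟨k, hk⟩ := hirr i j
  have hsum : ∑ l, (A ^ k) i l * w l = 0 := by
    simpa only [mulVec, dotProduct, Pi.smul_apply, hwi, smul_zero]
      using congrFun (pow_mulVec_eq_smul hAw k) i
  have hterm := (sum_eq_zero_iff_of_nonneg fun l _ =>
    mul_nonneg (pow_apply_nonneg hpos k i l) (hw l)).mp hsum j (mem_univ j)
  exact (mul_eq_zero.mp hterm).resolve_left hk

namespace IsHermitian

variable [DecidableEq ι] {A : Matrix ι ι ℝ} {μ : ℝ}

theorem toEuclideanLin_smul_one_sub_eigenvectorBasis (hA : A.IsHermitian) (i : ι) :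
    toEuclideanLin (μ • 1 - A) (hA.eigenvectorBasis i) =
      (μ - hA.eigenvalues i) • hA.eigenvectorBasis i := by
  ext1
  rw [ofLp_toLpLin, toLin'_apply, sub_mulVec, smul_mulVec, one_mulVec, hA.mulVec_eigenvectorBasis,
    WithLp.ofLp_smul, sub_smul]

theorem dotProduct_mulVec_le (hA : A.IsHermitian) (hμ : ∀ i, hA.eigenvalues i ≤ μ)
    (x : ι → ℝ) : x ⬝ᵥ A *ᵥ x ≤ μ * (x ⬝ᵥ x) := by
  have := hA.eigenvectorBasis.inner_map_self_nonneg hA.toEuclideanLin_smul_one_sub_eigenvectorBasis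
    (fun i => sub_nonneg.mpr (hμ i)) (WithLp.toLp 2 x)
  rw [inner_toLp_toEuclideanLin_toLp, dotProduct_smul_one_sub_mulVec] at this
  linarith

theorem mulVec_eq_smul_of_le_dotProduct_mulVec (hA : A.IsHermitian)
    (hμ : ∀ i, hA.eigenvalues i ≤ μ) {x : ι → ℝ} (hx : μ * (x ⬝ᵥ x) ≤ x ⬝ᵥ A *ᵥ x) :
    A *ᵥ x = μ • x := by
  have hzero : ⟪WithLp.toLp 2 x, toEuclideanLin (μ • 1 - A) (WithLp.toLp 2 x)⟫ = 0 := by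
    rw [inner_toLp_toEuclideanLin_toLp, dotProduct_smul_one_sub_mulVec]
    linarith [hA.dotProduct_mulVec_le hμ x]
  have := congrArg WithLp.ofLp <| hA.eigenvectorBasis.map_eq_zero_of_inner_map_self_eq_zero
    hA.toEuclideanLin_smul_one_sub_eigenvectorBasis (fun i => sub_nonneg.mpr (hμ i)) hzero
  rw [ofLp_toLpLin, toLin'_apply, sub_mulVec, smul_mulVec, one_mulVec] at this
  exact (sub_eq_zero.mp this).symm

theorem mulVec_abs_eq_smul (hA : A.IsHermitian) (hpos : ∀ i j, 0 ≤ A i j)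
    (hμ : ∀ i, hA.eigenvalues i ≤ μ) {v : ι → ℝ} (hv : A *ᵥ v = μ • v) :
    A *ᵥ |v| = μ • |v| := by
  refine hA.mulVec_eq_smul_of_le_dotProduct_mulVec hμ ?_
  calc μ * (|v| ⬝ᵥ |v|) = v ⬝ᵥ A *ᵥ v := by
        rw [abs_dotProduct_abs, hv, dotProduct_smul, smul_eq_mul]
    _ ≤ |v| ⬝ᵥ A *ᵥ |v| := dotProduct_mulVec_le_abs hpos v

theorem eq_zero_of_mulVec_eq_smul_of_apply_eq_zero (hA : A.IsHermitian)
    (hpos : ∀ i j, 0 ≤ A i j) (hirr : ∀ i j, ∃ k : ℕ, (A ^ k) i j ≠ 0)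
    (hμ : ∀ i, hA.eigenvalues i ≤ μ) {v : ι → ℝ} (hv : A *ᵥ v = μ • v) {i : ι}
    (hvi : v i = 0) : v = 0 := by
  have habs := eq_zero_of_nonneg_of_mulVec_eq_smul_of_apply_eq_zero hpos hirr
    (abs_nonneg v) (hA.mulVec_abs_eq_smul hpos hμ hv) (by rw [Pi.abs_apply, hvi, abs_zero])
  exact funext fun j => abs_eq_zero.mp (congrFun habs j)

end IsHermitian

end Matrix

theorem Submodule.finrank_le_one_of_apply_eq_zero {K ι : Type*} [Field K]
    (p : Submodule K (ι → K)) (i : ι) (hp : ∀ v ∈ p, v i = 0 → v = 0) :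
    Module.finrank K p ≤ 1 := by
  have hinj : Function.Injective (LinearMap.proj i ∘ₗ p.subtype) := by
    rw [← LinearMap.ker_eq_bot, LinearMap.ker_eq_bot']
    exact fun v hv => Subtype.ext (hp v v.2 hv)
  simpa using LinearMap.finrank_le_finrank_of_injective hinj

theorem stmt_8 (n : ℕ) (hn : 0 < n) (A : Matrix (Fin n) (Fin n) ℝ) (hA : A.IsHermitian)
    (hpos : ∀ i j, 0 ≤ A i j) (hirr : ∀ i j, ∃ k : ℕ, (A ^ k) i j ≠ 0) :
    Module.finrank ℝ
      (Module.End.eigenspace A.mulVecLin (⨆ i, hA.eigenvalues i)) = 1 := by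
  have : Nonempty (Fin n) := ⟨⟨0, hn⟩⟩
  have hμ (i : Fin n) : hA.eigenvalues i ≤ ⨆ i, hA.eigenvalues i :=
    le_ciSup (Set.finite_range _).bddAbove i
  obtain ⟨i₀, hi₀⟩ := exists_eq_ciSup_of_finite (f := hA.eigenvalues)
  refine le_antisymm ?_ (Submodule.one_le_finrank_iff.mpr ?_)
  · refine Submodule.finrank_le_one_of_apply_eq_zero _ i₀ fun v hv hvi => ?_
    exact hA.eq_zero_of_mulVec_eq_smul_of_apply_eq_zero hpos hirr hμ
      (Module.End.mem_eigenspace_iff.mp hv) hvi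
  · refine Module.End.hasEigenvalue_of_hasEigenvector (x := ⇑(hA.eigenvectorBasis i₀)) ⟨?_, ?_⟩
    · rw [Module.End.mem_eigenspace_iff, mulVecLin_apply, hA.mulVec_eigenvectorBasis, hi₀]
    · exact fun h => hA.eigenvectorBasis.orthonormal.ne_zero i₀ (WithLp.ofLp_injective 2 h)
end

section
/- Let A be a symmetric n×n real matrix with nonnegative entries whose second-largest eigenvalue (with multiplicity) exceeds 2, and whose corresponding eigenvector v has both positive and negative entries. Let P = {i : v i > 0} and N = {i : v i < 0}. Then both principal submatrices A_P and A_N have largest eigenvalue strictly greater than 2. -/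
/-!
Let `x` be the restriction of `v` to `P`. For `i ∈ P` the terms `A i j * v j` with `j ∉ P` are
`≤ 0`, so dropping them gives `λ v i ≤ (A_P x) i`; pairing with `x ≥ 0` gives
`λ ‖x‖² ≤ ⟪x, A_P x⟫`. The largest eigenvalue of `A_P` bounds every Rayleigh quotient, hence is
`≥ λ > 2`. The set `N` is the set `P` of the eigenvector `-v`.
-/

open Matrix Unitary

namespace Matrix

variable {m : Type*} [Fintype m]

section RayleighBound

variable [DecidableEq m] {B : Matrix m m ℝ}

theorem IsHermitian.dotProduct_mulVec_le_iSup_eigenvalues_mul_s13 (hB : B.IsHermitian) (x : m → ℝ) :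
    x ⬝ᵥ B *ᵥ x ≤ (⨆ i, hB.eigenvalues i) * (x ⬝ᵥ x) := by
  set c := ⨆ i, hB.eigenvalues i
  have hpsd : (c • 1 - B).PosSemidef := by
    -- `c • 1 - B = U * diagonal (c - λ) * star U` for the eigenvector unitary `U`
    rw [hB.spectral_theorem, ← map_one (conjStarAlgAut ℝ (Matrix m m ℝ) hB.eigenvectorUnitary),
      ← map_smul, ← map_sub, conjStarAlgAut_apply, isUnit_coe.posSemidef_star_right_conjugate_iff,
      smul_one_eq_diagonal, diagonal_sub]
    refine posSemidef_diagonal_iff.mpr fun i => ?_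
    simpa using le_ciSup (Set.finite_range _).bddAbove i
  simpa [sub_mulVec, smul_mulVec, dotProduct_sub, dotProduct_smul, sub_nonneg] using
    hpsd.dotProduct_mulVec_nonneg x

theorem IsHermitian.le_iSup_eigenvalues_of_mul_dotProduct_le (hB : B.IsHermitian) {x : m → ℝ}
    (hx : x ≠ 0) {μ : ℝ} (h : μ * (x ⬝ᵥ x) ≤ x ⬝ᵥ B *ᵥ x) : μ ≤ ⨆ i, hB.eigenvalues i := by
  have hxx : 0 < x ⬝ᵥ x := by simpa using dotProduct_self_star_pos_iff.mpr hx
  exact le_of_mul_le_mul_right (h.trans (hB.dotProduct_mulVec_le_iSup_eigenvalues_mul_s13 x)) hxx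

end RayleighBound

section PositivePart

abbrev principalSubmatrix {α : Type*} (A : Matrix m m α) (p : m → Prop) :
    Matrix {i // p i} {i // p i} α :=
  A.submatrix Subtype.val Subtype.val

variable {A : Matrix m m ℝ} {v : m → ℝ} {μ : ℝ} (p : m → Prop) [DecidablePred p]

theorem smul_le_principalSubmatrix_mulVec (hA : ∀ i j, 0 ≤ A i j) (hv : A *ᵥ v = μ • v)
    (hp : ∀ i, p i ↔ 0 < v i) :
    μ • (v ∘ Subtype.val : {i // p i} → ℝ) ≤ A.principalSubmatrix p *ᵥ (v ∘ Subtype.val) := by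
  intro i
  calc μ * v i = ∑ j, A i j * v j := (congrFun hv i).symm
    _ ≤ ∑ j, if p j then A i j * v j else 0 := by
      refine Finset.sum_le_sum fun j _ => ?_
      split_ifs with hj
      · exact le_rfl
      · exact mul_nonpos_of_nonneg_of_nonpos (hA i j) (not_lt.mp ((hp j).not.mp hj))
    _ = ∑ j : {j // p j}, A i j * v j := by
      rw [← Finset.sum_filter]
      exact Finset.sum_subtype _ (fun _ => by simp) _

theorem le_iSup_eigenvalues_principalSubmatrix [DecidableEq m] (hA : ∀ i j, 0 ≤ A i j)
    (hv : A *ᵥ v = μ • v) (hp : ∀ i, p i ↔ 0 < v i) (hne : ∃ i, p i)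
    (hS : (A.principalSubmatrix p).IsHermitian) : μ ≤ ⨆ i, hS.eigenvalues i := by
  obtain ⟨i, hi⟩ := hne
  set x : {i // p i} → ℝ := v ∘ Subtype.val
  have hx0 : 0 ≤ x := fun j => ((hp j).mp j.2).le
  have hx : x ≠ 0 := fun h => ((hp i).mp hi).ne' (congrFun h ⟨i, hi⟩)
  refine hS.le_iSup_eigenvalues_of_mul_dotProduct_le hx ?_
  rw [← smul_eq_mul, ← dotProduct_smul]
  exact dotProduct_le_dotProduct_of_nonneg_left (smul_le_principalSubmatrix_mulVec p hA hv hp) hx0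

end PositivePart

end Matrix

theorem stmt_13_general (n : ℕ) (A : Matrix (Fin n) (Fin n) ℝ)
    (hpos : ∀ i j, 0 ≤ A i j) (lam2 : ℝ) (hlam2 : 2 < lam2)
    (v : Fin n → ℝ) (heig : A.mulVec v = lam2 • v)
    (hP : ∃ i, 0 < v i) (hN : ∃ i, v i < 0) :
    ∀ (hAP : (A.submatrix (fun i : {i : Fin n // 0 < v i} => (i : Fin n))
              (fun i : {i : Fin n // 0 < v i} => (i : Fin n))).IsHermitian)
      (hAN : (A.submatrix (fun i : {i : Fin n // v i < 0} => (i : Fin n))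
              (fun i : {i : Fin n // v i < 0} => (i : Fin n))).IsHermitian),
      2 < ⨆ i, hAP.eigenvalues i ∧ 2 < ⨆ i, hAN.eigenvalues i := by
  intro hAP hAN
  have heig_neg : A *ᵥ -v = lam2 • -v := by rw [mulVec_neg, heig, smul_neg]
  exact ⟨hlam2.trans_le (le_iSup_eigenvalues_principalSubmatrix _ hpos heig
      (fun _ => Iff.rfl) hP hAP),
    hlam2.trans_le (le_iSup_eigenvalues_principalSubmatrix _ hpos heig_neg
      (fun _ => neg_pos.symm) hN hAN)⟩

theorem stmt_13 (n : ℕ) (A : Matrix (Fin n) (Fin n) ℝ) (hA : A.IsHermitian)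
    (hpos : ∀ i j, 0 ≤ A i j) (lam2 : ℝ) (hlam2 : 2 < lam2)
    (v : Fin n → ℝ) (heig : A.mulVec v = lam2 • v)
    (hP : ∃ i, 0 < v i) (hN : ∃ i, v i < 0) :
    ∀ (hAP : (A.submatrix (fun i : {i : Fin n // 0 < v i} => (i : Fin n))
              (fun i : {i : Fin n // 0 < v i} => (i : Fin n))).IsHermitian)
      (hAN : (A.submatrix (fun i : {i : Fin n // v i < 0} => (i : Fin n))
              (fun i : {i : Fin n // v i < 0} => (i : Fin n))).IsHermitian),
      2 < ⨆ i, hAP.eigenvalues i ∧ 2 < ⨆ i, hAN.eigenvalues i :=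
  stmt_13_general n A hpos lam2 hlam2 v heig hP hN
end

section
/- If v is an eigenvector of a symmetric real matrix A with eigenvalue μ and u is the vector whose i-th coordinate is max(v i, 0) (assumed nonzero), and A has nonnegative entries, then ⟪u, Au⟫ ≥ μ·⟪u, u⟫. -/
open Matrix RealInnerProductSpace

/-
Since `u = max v 0` dominates `v` and `A` is entrywise nonnegative, `A u ≥ A v` entrywise, and
pairing with `u ≥ 0` gives `⟪u, A u⟫ ≥ ⟪u, A v⟫ = μ ⟪u, v⟫`. Finally `⟪u, v⟫ = ⟪u, u⟫`, because on
each coordinate either `u i = 0` or `u i = v i`.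
-/

namespace Matrix

variable {ι R : Type*} [Fintype ι]

lemma mulVec_le_mulVec_of_nonneg [Semiring R] [PartialOrder R] [IsOrderedRing R]
    {A : Matrix ι ι R} (hA : ∀ i j, 0 ≤ A i j) {v w : ι → R} (hvw : v ≤ w) :
    A *ᵥ v ≤ A *ᵥ w :=
  fun i => dotProduct_le_dotProduct_of_nonneg_left hvw (hA i)

lemma max_zero_dotProduct_self [Ring R] [LinearOrder R] (v : ι → R) :
    (fun i => max (v i) 0) ⬝ᵥ v = (fun i => max (v i) 0) ⬝ᵥ fun i => max (v i) 0 := by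
  refine Finset.sum_congr rfl fun i _ => ?_
  rcases le_total (v i) 0 with h | h
  · simp only [max_eq_right h, zero_mul]
  · simp only [max_eq_left h]

end Matrix

theorem stmt_15_general (n : ℕ) (A : Matrix (Fin n) (Fin n) ℝ)
    (hpos : ∀ i j, 0 ≤ A i j) (μ : ℝ) (v : Fin n → ℝ)
    (heig : A.mulVec v = μ • v) :
    (fun i => max (v i) 0) ⬝ᵥ A.mulVec (fun i => max (v i) 0) ≥
      μ * ((fun i => max (v i) 0) ⬝ᵥ fun i => max (v i) 0) := by
  set u : Fin n → ℝ := fun i => max (v i) 0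
  calc μ * (u ⬝ᵥ u) = u ⬝ᵥ A *ᵥ v := by
        rw [heig, dotProduct_smul, smul_eq_mul, max_zero_dotProduct_self]
    _ ≤ u ⬝ᵥ A *ᵥ u :=
        dotProduct_le_dotProduct_of_nonneg_left
          (mulVec_le_mulVec_of_nonneg hpos fun i => le_max_left _ _) fun i => le_max_right _ _

theorem stmt_15 (n : ℕ) (A : Matrix (Fin n) (Fin n) ℝ) (hA : Aᵀ = A)
    (hpos : ∀ i j, 0 ≤ A i j) (μ : ℝ) (v : Fin n → ℝ)
    (heig : A.mulVec v = μ • v)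
    (hu : (fun i => max (v i) 0) ≠ (0 : Fin n → ℝ)) :
    (fun i => max (v i) 0) ⬝ᵥ A.mulVec (fun i => max (v i) 0) ≥
      μ * ((fun i => max (v i) 0) ⬝ᵥ fun i => max (v i) 0) :=
  stmt_15_general n A hpos μ v heig
end
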